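/- arXiv:0908.3346 — 2 statements merged into one kernel-verified Lean document; each statement's English description precedes it below -/
import Mathlib

section
/- In a red–black harmonic two-grid configuration, suppose Δ̃ = Π̃_{R,L} Λ_L Π̃_{I,L} + Π̃_{R,H} Λ_H Π̃_{I,H} is invertible. Then the black coarse system matrix Ã = D̃ F̃_R A F̃_I Ũ is invertible with inverse Ã⁻¹ = 4 (D̃ W_L) Δ̃⁻¹ (D̃ V_L)ᴴ. -/
/-!
Put `Ñ = Vᴴ D̃ᵀ D̃ W`. Since `W Vᴴ = 1` and `D̃ D̃ᵀ = 1`, the black sampling absorbs the aliasing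
pattern on both sides: `D̃ W Ñ = D̃ W` and `Ñ Vᴴ D̃ᵀ = Vᴴ D̃ᵀ`. The coarse matrix is
`Ã = D̃ W Π Vᴴ D̃ᵀ` with `Π = diag(Π̃_{R,L} Λ_L Π̃_{I,L}, Π̃_{R,H} Λ_H Π̃_{I,H})`, and the candidate
inverse is `4 D̃ W diag(Δ̃⁻¹, 0) Vᴴ D̃ᵀ`. Their product is `4 D̃ W (Ñ Π Ñ diag(Δ̃⁻¹, 0) Ñ) Vᴴ D̃ᵀ`,
and in the eigenvector basis `Ñ Π Ñ diag(Δ̃⁻¹, 0) Ñ = Ñ / 4` is a two-by-two block computation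
in which only the sum of the two diagonal blocks of `Π`, that is `Δ̃`, survives.
-/

open Matrix

/-- The red harmonic aliasing pattern `N̄ = (1/2)·[[I, I], [I, I]]`
(blocks of size `n`, acting on a fine grid of `2·n` nodes indexed by `Fin n ⊕ Fin n`). -/
noncomputable def Nbar (n : ℕ) : Matrix (Fin n ⊕ Fin n) (Fin n ⊕ Fin n) ℂ :=
  (1 / 2 : ℂ) • Matrix.fromBlocks 1 1 1 1

/-- The black harmonic aliasing pattern `Ñ = (1/2)·[[I, −I], [−I, I]]`. -/
noncomputable def Ntil (n : ℕ) : Matrix (Fin n ⊕ Fin n) (Fin n ⊕ Fin n) ℂ :=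
  (1 / 2 : ℂ) • Matrix.fromBlocks 1 (-1) (-1) 1

/-- `Dr` and `Db` are the red and black down-sampling matrices of a red–black
partition of the `2·n` fine-grid nodes into two halves: they are `{0,1}`-matrices,
the up-sampling matrices are their transposes, and they satisfy
`D̄Ū = I`, `D̃Ũ = I`, `D̃Ū = 0`, `D̄Ũ = 0` and `ŪD̄ + ŨD̃ = I`. -/
def IsRBPartition {n : ℕ} (Dr Db : Matrix (Fin n) (Fin n ⊕ Fin n) ℂ) : Prop :=
  (∀ i j, Dr i j = 0 ∨ Dr i j = 1) ∧ (∀ i j, Db i j = 0 ∨ Db i j = 1) ∧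
  Dr * Drᵀ = 1 ∧ Db * Dbᵀ = 1 ∧ Db * Drᵀ = 0 ∧ Dr * Dbᵀ = 0 ∧
  Drᵀ * Dr + Dbᵀ * Db = 1

lemma conjTranspose_eq_transpose_of_forall_eq_zero_or_one {m n R : Type*} [Semiring R]
    [StarRing R] {M : Matrix m n R} (h : ∀ i j, M i j = 0 ∨ M i j = 1) : Mᴴ = Mᵀ := by
  ext i j
  rcases h j i with h | h <;> simp [h]

lemma submatrix_inl_mul_mul_conjTranspose_submatrix_inl {l l' m n R : Type*} [Fintype m]
    [Fintype n] [Semiring R] [StarRing R] (W : Matrix l (m ⊕ n) R) (V : Matrix l' (m ⊕ n) R)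
    (B : Matrix m m R) :
    W.submatrix id Sum.inl * B * (V.submatrix id Sum.inl)ᴴ =
      W * (fromBlocks B 0 0 0 : Matrix (m ⊕ n) (m ⊕ n) R) * Vᴴ := by
  ext i j
  simp [mul_apply, Fintype.sum_sum_type, Finset.sum_mul]

lemma conj_mul_conj {ι R : Type*} [Fintype ι] [DecidableEq ι] [Semiring R]
    {W Y : Matrix ι ι R} (hYW : Y * W = 1) (P Q : Matrix ι ι R) :
    W * P * Y * (W * Q * Y) = W * (P * Q) * Y := by
  calc W * P * Y * (W * Q * Y) = W * P * (Y * W) * Q * Y := by simp only [Matrix.mul_assoc]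
    _ = W * (P * Q) * Y := by rw [hYW, Matrix.mul_one, Matrix.mul_assoc W P]

section Absorption

variable {ι κ R : Type*} [Fintype ι] [Fintype κ] [DecidableEq ι] [DecidableEq κ] [Semiring R]
  {D : Matrix κ ι R} {E : Matrix ι κ R} {W Y N : Matrix ι ι R}

lemma aliasing_absorbed_right (hDE : D * E = 1) (hWY : W * Y = 1) (hN : Y * (E * D) * W = N) :
    D * W * N = D * W := by
  calc D * W * N = D * (W * Y) * E * D * W := by simp only [← hN, Matrix.mul_assoc]
    _ = D * W := by rw [hWY, Matrix.mul_one, hDE, Matrix.one_mul]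

lemma aliasing_absorbed_left (hDE : D * E = 1) (hWY : W * Y = 1) (hN : Y * (E * D) * W = N) :
    N * (Y * E) = Y * E := by
  calc N * (Y * E) = Y * E * (D * (W * Y) * E) := by simp only [← hN, Matrix.mul_assoc]
    _ = Y * E := by rw [hWY, Matrix.mul_one, hDE, Matrix.mul_one]

end Absorption

lemma fromBlocks_alternating_sandwich {m R : Type*} [Fintype m] [DecidableEq m] [Ring R]
    {A B C : Matrix m m R} (h : (A + B) * C = 1) :
    fromBlocks 1 (-1) (-1) 1 * fromBlocks A 0 0 B * fromBlocks 1 (-1) (-1) 1 *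
        fromBlocks C 0 0 0 * fromBlocks 1 (-1) (-1) 1 = fromBlocks 1 (-1) (-1) 1 := by
  simp only [fromBlocks_multiply, Matrix.one_mul, Matrix.mul_one,
    Matrix.mul_zero, add_zero, zero_add, Matrix.neg_mul, Matrix.mul_neg, neg_neg, neg_zero]
  rw [← neg_add, Matrix.neg_mul, h, neg_neg]

lemma Ntil_sandwich {n : ℕ} {A B C : Matrix (Fin n) (Fin n) ℂ} (h : (A + B) * C = 1) :
    Ntil n * fromBlocks A 0 0 B * Ntil n * fromBlocks C 0 0 0 * Ntil n = (1 / 4 : ℂ) • Ntil n := by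
  simp only [Ntil, Matrix.smul_mul, Matrix.mul_smul, smul_smul, fromBlocks_alternating_sandwich h]
  norm_num

lemma coarse_mul_coarse_eq_smul {ι κ R : Type*} [Fintype ι] [Fintype κ] [DecidableEq ι]
    [DecidableEq κ] [CommSemiring R] {D : Matrix κ ι R} {E : Matrix ι κ R}
    {W Y N P Q : Matrix ι ι R} {c : R} (hDE : D * E = 1) (hWY : W * Y = 1)
    (hN : Y * (E * D) * W = N) (hPQ : N * P * N * Q * N = c • N) :
    D * (W * P * Y) * E * (D * (W * Q * Y) * E) = c • 1 := by
  have hWN := aliasing_absorbed_right hDE hWY hN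
  have hNY := aliasing_absorbed_left hDE hWY hN
  calc D * (W * P * Y) * E * (D * (W * Q * Y) * E)
      = D * W * N * P * (Y * (E * D) * W) * Q * (N * (Y * E)) := by
        rw [hWN, hNY]; simp only [Matrix.mul_assoc]
    _ = D * W * (N * P * N * Q * N) * (Y * E) := by rw [hN]; simp only [Matrix.mul_assoc]
    _ = c • (D * W * N * (Y * E)) := by rw [hPQ, Matrix.mul_smul, Matrix.smul_mul]
    _ = c • 1 := by rw [hWN, Matrix.mul_assoc, ← Matrix.mul_assoc W, hWY, Matrix.one_mul, hDE]

theorem black_coarse_matrix_inverse_general {n : ℕ}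
    (Dr Db : Matrix (Fin n) (Fin n ⊕ Fin n) ℂ)
    (hpart : IsRBPartition Dr Db)
    (W V A : Matrix (Fin n ⊕ Fin n) (Fin n ⊕ Fin n) ℂ)
    (lamL lamH : Fin n → ℂ)
    (hbi : Vᴴ * W = 1)
    (hblack : Vᴴ * (Dbᵀ * Db) * W = Ntil n)
    (hA : A = W * Matrix.fromBlocks (diagonal lamL) 0 0 (diagonal lamH) * Vᴴ)
    (qRL qRH qIL qIH : Fin n → ℂ)
    (FtilR FtilI : Matrix (Fin n ⊕ Fin n) (Fin n ⊕ Fin n) ℂ)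
    (hFtilR : FtilR = W * Matrix.fromBlocks (diagonal qRL) 0 0 (diagonal qRH) * Vᴴ)
    (hFtilI : FtilI = W * Matrix.fromBlocks (diagonal qIL) 0 0 (diagonal qIH) * Vᴴ)
    (Δtil : Matrix (Fin n) (Fin n) ℂ)
    (hΔdef : Δtil = diagonal qRL * diagonal lamL * diagonal qIL +
        diagonal qRH * diagonal lamH * diagonal qIH)
    (hΔ : IsUnit Δtil) :
    IsUnit (Db * FtilR * A * FtilI * Dbᵀ) ∧
    (Db * FtilR * A * FtilI * Dbᵀ)⁻¹ =
      (4 : ℂ) • ((Db * W.submatrix id Sum.inl) * Δtil⁻¹ *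
        (Db * V.submatrix id Sum.inl)ᴴ) := by
  obtain ⟨-, h01b, -, hbb, -⟩ := hpart
  have hsymbol : FtilR * A * FtilI = W * fromBlocks
      (diagonal qRL * diagonal lamL * diagonal qIL) 0 0
      (diagonal qRH * diagonal lamH * diagonal qIH) * Vᴴ := by
    rw [hFtilR, hA, hFtilI, conj_mul_conj hbi, conj_mul_conj hbi]
    simp only [fromBlocks_multiply, Matrix.mul_zero, Matrix.zero_mul, add_zero, zero_add]
  have hcandidate : (Db * W.submatrix id Sum.inl) * Δtil⁻¹ * (Db * V.submatrix id Sum.inl)ᴴ =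
      Db * (W * fromBlocks Δtil⁻¹ 0 0 0 * Vᴴ) * Dbᵀ := by
    rw [← submatrix_inl_mul_mul_conjTranspose_submatrix_inl, conjTranspose_mul,
      conjTranspose_eq_transpose_of_forall_eq_zero_or_one h01b]
    simp only [Matrix.mul_assoc]
  have hΔinv : (diagonal qRL * diagonal lamL * diagonal qIL +
      diagonal qRH * diagonal lamH * diagonal qIH) * Δtil⁻¹ = 1 := by
    rw [← hΔdef]
    exact mul_nonsing_inv _ ((isUnit_iff_isUnit_det _).mp hΔ)
  have hright : Db * FtilR * A * FtilI * Dbᵀ *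
      ((4 : ℂ) • ((Db * W.submatrix id Sum.inl) * Δtil⁻¹ *
        (Db * V.submatrix id Sum.inl)ᴴ)) = 1 := by
    rw [show Db * FtilR * A * FtilI * Dbᵀ = Db * (FtilR * A * FtilI) * Dbᵀ by
        simp only [Matrix.mul_assoc],
      hsymbol, hcandidate, Matrix.mul_smul,
      coarse_mul_coarse_eq_smul hbb (mul_eq_one_comm.mp hbi) hblack (Ntil_sandwich hΔinv),
      smul_smul]
    norm_num
  exact ⟨.of_mul_eq_one _ hright, inv_eq_right_inv hright⟩

/-- In a red–black harmonic two-grid configuration with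
`Δ̃ = Π̃_{R,L} Λ_L Π̃_{I,L} + Π̃_{R,H} Λ_H Π̃_{I,H}` invertible, the black Galerkin
coarse matrix `Ã = D̃ F̃_R A F̃_I Ũ` is invertible with
`Ã⁻¹ = 4 (D̃ W_L) Δ̃⁻¹ (D̃ V_L)ᴴ`. -/
theorem black_coarse_matrix_inverse {n : ℕ}
    (Dr Db : Matrix (Fin n) (Fin n ⊕ Fin n) ℂ)
    (hpart : IsRBPartition Dr Db)
    (W V A : Matrix (Fin n ⊕ Fin n) (Fin n ⊕ Fin n) ℂ)
    (lamL lamH : Fin n → ℂ)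
    (hbi : Vᴴ * W = 1)
    (hred : Vᴴ * (Drᵀ * Dr) * W = Nbar n)
    (hblack : Vᴴ * (Dbᵀ * Db) * W = Ntil n)
    (hA : A = W * Matrix.fromBlocks (diagonal lamL) 0 0 (diagonal lamH) * Vᴴ)
    (qRL qRH qIL qIH : Fin n → ℂ)
    (FtilR FtilI : Matrix (Fin n ⊕ Fin n) (Fin n ⊕ Fin n) ℂ)
    (hFtilR : FtilR = W * Matrix.fromBlocks (diagonal qRL) 0 0 (diagonal qRH) * Vᴴ)
    (hFtilI : FtilI = W * Matrix.fromBlocks (diagonal qIL) 0 0 (diagonal qIH) * Vᴴ)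
    (Δtil : Matrix (Fin n) (Fin n) ℂ)
    (hΔdef : Δtil = diagonal qRL * diagonal lamL * diagonal qIL +
        diagonal qRH * diagonal lamH * diagonal qIH)
    (hΔ : IsUnit Δtil) :
    IsUnit (Db * FtilR * A * FtilI * Dbᵀ) ∧
    (Db * FtilR * A * FtilI * Dbᵀ)⁻¹ =
      (4 : ℂ) • ((Db * W.submatrix id Sum.inl) * Δtil⁻¹ *
        (Db * V.submatrix id Sum.inl)ᴴ) :=
  black_coarse_matrix_inverse_general Dr Db hpart W V A lamL lamH hbi hblack hA qRL qRH qIL qIH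
    FtilR FtilI hFtilR hFtilI Δtil hΔdef hΔ
end

section
/- Under the multiplicative direct two-grid configuration F̄_I = F̄_R = F̃_R = I and F̃_I = A⋆ in a red–black harmonic two-grid configuration with A non-singular and det(Λ_L + Λ_H) ≠ 0, the coarse symbol matrices satisfy Δ̄ = Λ_L + Λ_H and Δ̃ = 2 Λ_L Λ_H; in particular both Galerkin coarse matrices Ā = D̄ A Ū and Ã = D̃ A A⋆ Ũ are invertible. -/
/-! Conjugation by `W` turns every matrix of the statement into its symbol, and the filters equal
to `I` have symbol `I`. Since `N̄ - Ñ` is the block swap, the mirror `A⋆` has symbol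
`diag(Λ_H, Λ_L)`, which gives both coarse symbols.

For invertibility: `ŪD̄` and `ŨD̃` are the projections `W N̄ Vᴴ` and `W Ñ Vᴴ`, and both patterns
satisfy `N diag(X, Y) N = N diag(Δ/2, Δ/2)` with `Δ = X + Y`. Hence, if `P = DᵀD` and `M` has symbol
`diag(X, Y)`, then `P M P = P C` for `C = W diag(Δ/2, Δ/2) Vᴴ`, and `D C⁻¹ Dᵀ` inverts the Galerkin
matrix `D M Dᵀ`. Here `Δ̄ = Λ_L + Λ_H` is invertible by hypothesis and `Δ̃ = 2 Λ_L Λ_H` because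
`A` is. -/

open Matrix

/-- The mirror `M⋆ = (ŪD̄ − ŨD̃) M (ŪD̄ − ŨD̃)` of a matrix with respect to a
red–black partition. -/
noncomputable def mirror {n : ℕ} (Dr Db : Matrix (Fin n) (Fin n ⊕ Fin n) ℂ)
    (M : Matrix (Fin n ⊕ Fin n) (Fin n ⊕ Fin n) ℂ) :
    Matrix (Fin n ⊕ Fin n) (Fin n ⊕ Fin n) ℂ :=
  (Drᵀ * Dr - Dbᵀ * Db) * M * (Drᵀ * Dr - Dbᵀ * Db)

section Conjugation

variable {ι R : Type*} [Fintype ι] [DecidableEq ι] [CommRing R] {W Winv : Matrix ι ι R}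

theorem conj_mul_conj_s14 (hW : Winv * W = 1) (X Y : Matrix ι ι R) :
    W * X * Winv * (W * Y * Winv) = W * (X * Y) * Winv := by
  simp only [Matrix.mul_assoc, ← Matrix.mul_assoc Winv W, hW, Matrix.one_mul]

theorem inv_mul_conj_mul (hW : Winv * W = 1) (X : Matrix ι ι R) :
    Winv * (W * X * Winv) * W = X := by
  simp only [Matrix.mul_assoc, ← Matrix.mul_assoc Winv W, hW, Matrix.one_mul, Matrix.mul_one]

theorem conj_eq_iff (hW : Winv * W = 1) {X M : Matrix ι ι R} :
    W * X * Winv = M ↔ X = Winv * M * W := by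
  have hW' : W * Winv = 1 := mul_eq_one_comm.mp hW
  constructor
  · rintro rfl
    exact (inv_mul_conj_mul hW X).symm
  · rintro rfl
    simp only [Matrix.mul_assoc, ← Matrix.mul_assoc W Winv, hW', Matrix.one_mul, Matrix.mul_one]

theorem conj_inj (hW : Winv * W = 1) {X Y : Matrix ι ι R} :
    W * X * Winv = W * Y * Winv ↔ X = Y := by
  rw [conj_eq_iff hW, inv_mul_conj_mul hW]

theorem IsUnit.of_conj (hW : Winv * W = 1) {X : Matrix ι ι R} (h : IsUnit (W * X * Winv)) :
    IsUnit X := by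
  rw [← inv_mul_conj_mul hW X]
  exact ((isUnit_iff_exists_inv.2 ⟨W, hW⟩).mul h).mul (isUnit_iff_exists_inv'.2 ⟨Winv, hW⟩)

end Conjugation

theorem isUnit_fromBlocks_zero_zero_iff {m R : Type*} [Fintype m] [DecidableEq m] [CommRing R]
    {X Y : Matrix m m R} : IsUnit (fromBlocks X 0 0 Y) ↔ IsUnit X ∧ IsUnit Y := by
  simp only [isUnit_iff_isUnit_det, det_fromBlocks_zero₂₁, IsUnit.mul_iff]

theorem fromBlocks_eq_one_of_conj_eq_one {m R : Type*} [Fintype m] [DecidableEq m] [CommRing R]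
    {W Winv : Matrix (m ⊕ m) (m ⊕ m) R} (hW : Winv * W = 1) {X Y : Matrix m m R}
    (h : W * fromBlocks X 0 0 Y * Winv = 1) : X = 1 ∧ Y = 1 := by
  rw [conj_eq_iff hW, Matrix.mul_one, hW, ← fromBlocks_one] at h
  obtain ⟨hX, -, -, hY⟩ := fromBlocks_inj.1 h
  exact ⟨hX, hY⟩

theorem fromBlocks_swap_mul_fromBlocks_mul_fromBlocks_swap {m R : Type*} [Fintype m]
    [DecidableEq m] [Semiring R] (X Y : Matrix m m R) :
    fromBlocks 0 1 1 0 * fromBlocks X 0 0 Y * fromBlocks 0 1 1 0 = fromBlocks Y 0 0 X := by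
  simp only [fromBlocks_multiply, Matrix.zero_mul, Matrix.mul_zero, Matrix.one_mul,
    Matrix.mul_one, add_zero, zero_add]

theorem isUnit_mul_mul_transpose_of_proj {m ι R : Type*} [Fintype m] [DecidableEq m] [Fintype ι]
    [DecidableEq ι] [CommRing R] {D : Matrix m ι R} (hD : D * Dᵀ = 1) {M C C' : Matrix ι ι R}
    (hC : C * C' = 1) (h : Dᵀ * D * M * (Dᵀ * D) = Dᵀ * D * C) : IsUnit (D * M * Dᵀ) := by
  refine isUnit_iff_exists_inv.2 ⟨D * C' * Dᵀ, ?_⟩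
  calc D * M * Dᵀ * (D * C' * Dᵀ) = D * (Dᵀ * D * M * (Dᵀ * D)) * C' * Dᵀ := by
        simp only [← Matrix.mul_assoc, hD, Matrix.one_mul]
    _ = 1 := by
      rw [h]
      simp only [← Matrix.mul_assoc, hD, Matrix.one_mul]
      rw [Matrix.mul_assoc D C, hC, Matrix.mul_one, hD]

theorem isUnit_galerkin {m ι R : Type*} [Fintype m] [DecidableEq m] [Fintype ι]
    [DecidableEq ι] [CommRing R] {D : Matrix m ι R} (hD : D * Dᵀ = 1)
    {W Winv N Y Z : Matrix ι ι R} (hW : Winv * W = 1) (hP : Dᵀ * D = W * N * Winv)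
    (hN : N * Y * N = N * Z) (hZ : IsUnit Z) : IsUnit (D * (W * Y * Winv) * Dᵀ) := by
  obtain ⟨u, rfl⟩ := hZ
  refine isUnit_mul_mul_transpose_of_proj hD (C := W * (u : Matrix ι ι R) * Winv)
    (C' := W * (↑u⁻¹ : Matrix ι ι R) * Winv) ?_ ?_
  · rw [conj_mul_conj_s14 hW, u.mul_inv, Matrix.mul_one, mul_eq_one_comm.mp hW]
  · rw [hP, conj_mul_conj_s14 hW, conj_mul_conj_s14 hW, conj_mul_conj_s14 hW, hN]

section Harmonic

variable {n : ℕ}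

theorem Nbar_mul_fromBlocks_mul_Nbar (X Y : Matrix (Fin n) (Fin n) ℂ) :
    Nbar n * fromBlocks X 0 0 Y * Nbar n =
      Nbar n * fromBlocks ((2⁻¹ : ℂ) • (X + Y)) 0 0 ((2⁻¹ : ℂ) • (X + Y)) := by
  simp only [Nbar, smul_mul_assoc, mul_smul_comm, smul_smul, fromBlocks_multiply,
    Matrix.one_mul, Matrix.mul_one, Matrix.mul_zero, fromBlocks_smul]
  congr 1 <;> module

theorem Ntil_mul_fromBlocks_mul_Ntil (X Y : Matrix (Fin n) (Fin n) ℂ) :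
    Ntil n * fromBlocks X 0 0 Y * Ntil n =
      Ntil n * fromBlocks ((2⁻¹ : ℂ) • (X + Y)) 0 0 ((2⁻¹ : ℂ) • (X + Y)) := by
  simp only [Ntil, smul_mul_assoc, mul_smul_comm, smul_smul, fromBlocks_multiply,
    Matrix.one_mul, Matrix.mul_one, Matrix.mul_zero, Matrix.neg_mul, Matrix.mul_neg,
    fromBlocks_smul]
  congr 1 <;> module

theorem Nbar_sub_Ntil : Nbar n - Ntil n = fromBlocks 0 1 1 0 := by
  rw [Nbar, Ntil, ← smul_sub, sub_eq_add_neg, fromBlocks_neg, fromBlocks_add,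
    fromBlocks_smul]
  congr 1 <;> module

end Harmonic

theorem IsUnit.smul_of_ne_zero {K M : Type*} [GroupWithZero K] [Monoid M] [MulAction K M]
    [SMulCommClass K M M] [IsScalarTower K M M] {c : K} (hc : c ≠ 0) {x : M} (hx : IsUnit x) :
    IsUnit (c • x) := by
  simpa only [Units.smul_def, Units.val_mk0] using hx.smul (Units.mk0 c hc)

theorem isUnit_galerkin_of_isUnit_add {n : ℕ} {D : Matrix (Fin n) (Fin n ⊕ Fin n) ℂ}
    (hD : D * Dᵀ = 1) {W Winv N : Matrix (Fin n ⊕ Fin n) (Fin n ⊕ Fin n) ℂ}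
    (hW : Winv * W = 1) (hP : Dᵀ * D = W * N * Winv) (hN : N = Nbar n ∨ N = Ntil n)
    {X Y : Matrix (Fin n) (Fin n) ℂ} (hXY : IsUnit (X + Y)) :
    IsUnit (D * (W * fromBlocks X 0 0 Y * Winv) * Dᵀ) := by
  have h2 : IsUnit ((2⁻¹ : ℂ) • (X + Y)) := hXY.smul_of_ne_zero (by norm_num)
  refine isUnit_galerkin hD hW hP ?_ (isUnit_fromBlocks_zero_zero_iff.2 ⟨h2, h2⟩)
  rcases hN with rfl | rfl
  · exact Nbar_mul_fromBlocks_mul_Nbar X Y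
  · exact Ntil_mul_fromBlocks_mul_Ntil X Y

theorem mirror_conj_fromBlocks {n : ℕ} {Dr Db : Matrix (Fin n) (Fin n ⊕ Fin n) ℂ}
    {W Winv : Matrix (Fin n ⊕ Fin n) (Fin n ⊕ Fin n) ℂ} (hW : Winv * W = 1)
    (hr : Drᵀ * Dr = W * Nbar n * Winv) (hb : Dbᵀ * Db = W * Ntil n * Winv)
    (X Y : Matrix (Fin n) (Fin n) ℂ) :
    mirror Dr Db (W * fromBlocks X 0 0 Y * Winv) = W * fromBlocks Y 0 0 X * Winv := by
  rw [mirror, hr, hb, ← Matrix.sub_mul, ← Matrix.mul_sub, Nbar_sub_Ntil, conj_mul_conj_s14 hW,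
    conj_mul_conj_s14 hW, fromBlocks_swap_mul_fromBlocks_mul_fromBlocks_swap]

/-- Under the multiplicative direct two-grid configuration
`F̄_I = F̄_R = F̃_R = I`, `F̃_I = A⋆` (symbols `Π̄_R, Π̄_I, Π̃_R` of the identity
and `Π̃_I` of the mirror `A⋆`), the coarse symbol matrices satisfy
`Δ̄ = Λ_L + Λ_H` and `Δ̃ = 2 Λ_L Λ_H`; in particular both Galerkin coarse
matrices `Ā = D̄ A Ū` and `Ã = D̃ A A⋆ Ũ` are invertible. -/
theorem multiplicative_mirror_coarse_symbols {n : ℕ}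
    (Dr Db : Matrix (Fin n) (Fin n ⊕ Fin n) ℂ)
    (hpart : IsRBPartition Dr Db)
    (W V A : Matrix (Fin n ⊕ Fin n) (Fin n ⊕ Fin n) ℂ)
    (lamL lamH : Fin n → ℂ)
    (hbi : Vᴴ * W = 1)
    (hred : Vᴴ * (Drᵀ * Dr) * W = Nbar n)
    (hblack : Vᴴ * (Dbᵀ * Db) * W = Ntil n)
    (hA : A = W * Matrix.fromBlocks (diagonal lamL) 0 0 (diagonal lamH) * Vᴴ)
    (hAu : IsUnit A)
    (hdet : (diagonal lamL + diagonal lamH).det ≠ 0)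
    (pRL pRH pIL pIH qRL qRH qIL qIH : Fin n → ℂ)
    (hFbarR : W * Matrix.fromBlocks (diagonal pRL) 0 0 (diagonal pRH) * Vᴴ = 1)
    (hFbarI : W * Matrix.fromBlocks (diagonal pIL) 0 0 (diagonal pIH) * Vᴴ = 1)
    (hFtilR : W * Matrix.fromBlocks (diagonal qRL) 0 0 (diagonal qRH) * Vᴴ = 1)
    (hFtilI : W * Matrix.fromBlocks (diagonal qIL) 0 0 (diagonal qIH) * Vᴴ =
        mirror Dr Db A) :
    diagonal pRL * diagonal lamL * diagonal pIL +
        diagonal pRH * diagonal lamH * diagonal pIH =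
      diagonal lamL + diagonal lamH ∧
    diagonal qRL * diagonal lamL * diagonal qIL +
        diagonal qRH * diagonal lamH * diagonal qIH =
      (2 : ℂ) • (diagonal lamL * diagonal lamH) ∧
    IsUnit (Dr * A * Drᵀ) ∧
    IsUnit (Db * A * mirror Dr Db A * Dbᵀ) := by
  obtain ⟨-, -, hDr, hDb, -, -, -⟩ := hpart
  have hPr : Drᵀ * Dr = W * Nbar n * Vᴴ := ((conj_eq_iff hbi).2 hred.symm).symm
  have hPb : Dbᵀ * Db = W * Ntil n * Vᴴ := ((conj_eq_iff hbi).2 hblack.symm).symm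
  have hmir : mirror Dr Db A = W * fromBlocks (diagonal lamH) 0 0 (diagonal lamL) * Vᴴ := by
    rw [hA, mirror_conj_fromBlocks hbi hPr hPb]
  obtain ⟨hpRL, hpRH⟩ := fromBlocks_eq_one_of_conj_eq_one hbi hFbarR
  obtain ⟨hpIL, hpIH⟩ := fromBlocks_eq_one_of_conj_eq_one hbi hFbarI
  obtain ⟨hqRL, hqRH⟩ := fromBlocks_eq_one_of_conj_eq_one hbi hFtilR
  obtain ⟨hqIL, -, -, hqIH⟩ := fromBlocks_inj.1 ((conj_inj hbi).1 (hFtilI.trans hmir))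
  have hΔtil : diagonal lamL * diagonal lamH + diagonal lamH * diagonal lamL =
      (2 : ℂ) • (diagonal lamL * diagonal lamH) := by
    rw [(commute_diagonal lamH lamL).eq, two_smul]
  obtain ⟨hL, hH⟩ := isUnit_fromBlocks_zero_zero_iff.1 (IsUnit.of_conj hbi (hA ▸ hAu))
  refine ⟨?_, ?_, ?_, ?_⟩
  · rw [hpRL, hpRH, hpIL, hpIH]
    simp only [Matrix.one_mul, Matrix.mul_one]
  · rw [hqRL, hqRH, hqIL, hqIH, Matrix.one_mul, Matrix.one_mul, hΔtil]
  · rw [hA]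
    exact isUnit_galerkin_of_isUnit_add hDr hbi hPr (Or.inl rfl)
      ((isUnit_iff_isUnit_det _).2 (isUnit_iff_ne_zero.2 hdet))
  · rw [Matrix.mul_assoc Db A, hmir, hA, conj_mul_conj_s14 hbi, fromBlocks_multiply]
    simp only [Matrix.mul_zero, Matrix.zero_mul, add_zero, zero_add]
    exact isUnit_galerkin_of_isUnit_add hDb hbi hPb (Or.inr rfl)
      (hΔtil ▸ (hL.mul hH).smul_of_ne_zero two_ne_zero)
end
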